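/- (Two-point log-Sobolev inequality, real form) For all real numbers a, b: (1/2)(a² log a² + b² log b²) − ((a² + b²)/2) log((a² + b²)/2) ≤ (1/2)(b − a)², where t log t² is interpreted as 0 at t = 0. -/

import Mathlib

/-!
The entropy depends only on `a², b²`, and `(|a| - |b|)² ≤ (b - a)²`, so it suffices to prove
`Ent(s, t) ≤ (s - t)² / 2` for `0 ≤ t ≤ s`. Both sides vanish at `s = t`. In `s`, the entropy has
derivative `s (log s² - log m)` with `m = (s² + t²) / 2`; by `2 log v ≤ v - v⁻¹` for `v ≥ 1`, taken
at `v = s / √m`, this is at most `(s² - t²) / (2 √m)`, hence at most `s - t`, the derivative of the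
right side, because `s + t ≤ 2 √m` (arithmetic mean ≤ quadratic mean).
-/

open Real Set

namespace Real

lemma two_mul_log_le_sub_inv {v : ℝ} (hv : 1 ≤ v) : 2 * log v ≤ v - v⁻¹ := by
  have hderiv : ∀ w ∈ interior (Ici (1 : ℝ)),
      HasDerivWithinAt (fun v ↦ v - v⁻¹ - 2 * log v) ((1 - w⁻¹) ^ 2) (interior (Ici 1)) w := by
    intro w hw
    rw [interior_Ici] at hw
    have hw0 : w ≠ 0 := (zero_lt_one.trans hw).ne'
    exact ((((hasDerivAt_id' w).fun_sub (hasDerivAt_inv hw0)).fun_sub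
      ((hasDerivAt_log hw0).const_mul 2)).congr_deriv (by field_simp; ring)).hasDerivWithinAt
  have hmono : MonotoneOn (fun v ↦ v - v⁻¹ - 2 * log v) (Ici 1) :=
    monotoneOn_of_hasDerivWithinAt_nonneg (convex_Ici 1)
      (fun w hw ↦ by fun_prop (disch := exact (zero_lt_one.trans_le hw).ne'))
      hderiv fun w _ ↦ sq_nonneg _
  have := hmono self_mem_Ici hv hv
  simp only [inv_one, log_one] at this
  linarith

lemma two_mul_log_sub_log_le {p q : ℝ} (hq : 0 < q) (hqp : q ≤ p) :
    2 * (log p - log q) ≤ p / q - q / p := by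
  have h := two_mul_log_le_sub_inv ((one_le_div hq).2 hqp)
  rwa [log_div (hq.trans_le hqp).ne' hq.ne', inv_div] at h

lemma mul_log_sq_sub_log_mean_sq_le {s t : ℝ} (ht : 0 ≤ t) (hts : t ≤ s) (hs : 0 < s) :
    s * (log (s ^ 2) - log ((s ^ 2 + t ^ 2) / 2)) ≤ s - t := by
  set q := √((s ^ 2 + t ^ 2) / 2)
  have hq : 0 < q := by positivity
  have hq2 : q ^ 2 = (s ^ 2 + t ^ 2) / 2 := sq_sqrt (by positivity)
  have hqs : q ≤ s := (sqrt_le_left hs.le).2 (by nlinarith)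
  have hmean : s + t ≤ 2 * q := by
    have : (s + t) / 2 ≤ q := le_sqrt_of_sq_le (by nlinarith [sq_nonneg (s - t)])
    linarith
  have hlog := mul_le_mul_of_nonneg_left (two_mul_log_sub_log_le hq hqs) hs.le
  rw [← hq2, log_pow, log_pow, Nat.cast_ofNat]
  calc s * (2 * log s - 2 * log q) = s * (2 * (log s - log q)) := by ring
    _ ≤ s * (s / q - q / s) := hlog
    _ = (s - t) * ((s + t) / (2 * q)) := by field_simp; rw [hq2]; ring
    _ ≤ s - t := mul_le_of_le_one_right (by linarith) ((div_le_one (by positivity)).2 hmean)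

end Real

/-- `Ent(f²)` for `f = (a, b)` under the uniform measure on two points, with `0 log 0 = 0` given by
`Real.log 0 = 0`. -/
noncomputable def twoPointEntropy (a b : ℝ) : ℝ :=
  (1 / 2) * (a ^ 2 * log (a ^ 2) + b ^ 2 * log (b ^ 2))
    - ((a ^ 2 + b ^ 2) / 2) * log ((a ^ 2 + b ^ 2) / 2)

lemma twoPointEntropy_abs_abs (a b : ℝ) : twoPointEntropy |a| |b| = twoPointEntropy a b := by
  simp only [twoPointEntropy, sq_abs]

lemma twoPointEntropy_comm (a b : ℝ) : twoPointEntropy a b = twoPointEntropy b a := by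
  unfold twoPointEntropy
  rw [add_comm (b ^ 2) (a ^ 2)]
  ring

lemma twoPointEntropy_self (t : ℝ) : twoPointEntropy t t = 0 := by
  unfold twoPointEntropy
  ring_nf

lemma hasDerivAt_twoPointEntropy_left {s : ℝ} (t : ℝ) (hs : s ≠ 0) :
    HasDerivAt (fun s ↦ twoPointEntropy s t)
      (s * (log (s ^ 2) - log ((s ^ 2 + t ^ 2) / 2))) s := by
  have hsq : s ^ 2 ≠ 0 := pow_ne_zero 2 hs
  have hm : (s ^ 2 + t ^ 2) / 2 ≠ 0 := by positivity
  have hsq' : HasDerivAt (fun s ↦ s ^ 2) (2 * s) s := by simpa using hasDerivAt_pow 2 s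
  have hm' : HasDerivAt (fun s ↦ (s ^ 2 + t ^ 2) / 2) s s := by
    simpa using (hsq'.add_const (t ^ 2)).div_const 2
  exact (((((hasDerivAt_mul_log hsq).comp (h := fun s ↦ s ^ 2) s hsq').add_const
    (t ^ 2 * log (t ^ 2))).const_mul (1 / 2)).fun_sub
    ((hasDerivAt_mul_log hm).comp (h := fun s ↦ (s ^ 2 + t ^ 2) / 2) s hm')).congr_deriv (by ring)

lemma twoPointEntropy_le_half_sq_sub_of_le {s t : ℝ} (ht : 0 ≤ t) (hts : t ≤ s) :
    twoPointEntropy s t ≤ (1 / 2) * (s - t) ^ 2 := by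
  have hderiv : ∀ w ∈ interior (Ici t),
      HasDerivWithinAt (fun s ↦ (1 / 2) * (s - t) ^ 2 - twoPointEntropy s t)
        ((w - t) - w * (log (w ^ 2) - log ((w ^ 2 + t ^ 2) / 2))) (interior (Ici t)) w := by
    intro w hw
    rw [interior_Ici] at hw
    have hsub : HasDerivAt (fun s ↦ (1 / 2) * (s - t) ^ 2) (w - t) w :=
      ((((hasDerivAt_id' w).sub_const t).pow 2).const_mul (1 / 2)).congr_deriv (by ring)
    exact (hsub.fun_sub (hasDerivAt_twoPointEntropy_left t (ht.trans_lt hw).ne')).hasDerivWithinAt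
  have hmono := monotoneOn_of_hasDerivWithinAt_nonneg (convex_Ici t)
    (by unfold twoPointEntropy; fun_prop) hderiv fun w hw ↦ by
      rw [interior_Ici] at hw
      exact sub_nonneg.2 (mul_log_sq_sub_log_mean_sq_le ht hw.le (ht.trans_lt hw))
  have := hmono self_mem_Ici hts hts
  simp only [sub_self, twoPointEntropy_self] at this
  linarith

theorem twoPointEntropy_le (a b : ℝ) : twoPointEntropy a b ≤ (1 / 2) * (b - a) ^ 2 := by
  wlog h : |b| ≤ |a| generalizing a b
  · rw [twoPointEntropy_comm, sub_sq_comm]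
    exact this b a (le_of_not_ge h)
  rw [← twoPointEntropy_abs_abs]
  calc twoPointEntropy |a| |b| ≤ (1 / 2) * (|a| - |b|) ^ 2 :=
        twoPointEntropy_le_half_sq_sub_of_le (abs_nonneg b) h
    _ ≤ (1 / 2) * (b - a) ^ 2 := mul_le_mul_of_nonneg_left
        (sq_le_sq.2 ((abs_abs_sub_abs_le_abs_sub a b).trans_eq (abs_sub_comm a b))) (by norm_num)

/-- Two-point log-Sobolev inequality, real form. In Mathlib,
`Real.log 0 = 0`, so `a² log a²` is interpreted as 0 at a = 0. -/
theorem two_point_lsi (a b : ℝ) :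
    (1 / 2) * (a ^ 2 * Real.log (a ^ 2) + b ^ 2 * Real.log (b ^ 2))
        - ((a ^ 2 + b ^ 2) / 2) * Real.log ((a ^ 2 + b ^ 2) / 2)
      ≤ (1 / 2) * (b - a) ^ 2 :=
  twoPointEntropy_le a b
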